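/- arXiv:1207.2125 — 2 statements merged into one kernel-verified Lean document; each statement's English description precedes it below -/
import Mathlib

section
/- (Subadditivity) For any 1 ≤ z ≤ n and any x ≥ 0, the maximum load of the local search allocation satisfies P[X_max^(n) ≥ ⌈n/z⌉·x] ≤ ⌈n/z⌉ · P[X_max^(z) ≥ x]. -/
open Finset

variable {V : Type*} [Fintype V] [DecidableEq V]

/-- One step of the local search from `u` with current loads `x`:
among the neighbors of `u` (listed in the tie-breaking order `ξ u`) that have load
strictly smaller than `x u`, move to the first one of minimal load; if there is no
such neighbor, stay at `u` (i.e. `u` is a local minimum). -/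
def lsNext (G : SimpleGraph V) [DecidableRel G.Adj] (ξ : V → List V)
    (x : V → ℕ) (u : V) : V :=
  ((((ξ u).filter (fun w => decide (G.Adj u w ∧ x w < x u)))).argmin x).getD u

/-- Iterate the local search for at most `n` steps (stopping at a local minimum). -/
def lsIter (G : SimpleGraph V) [DecidableRel G.Adj] (ξ : V → List V)
    (x : V → ℕ) : ℕ → V → V
  | 0, u => u
  | n + 1, u => if lsNext G ξ x u = u then u else lsIter G ξ x n (lsNext G ξ x u)

/-- The vertex where a ball born at `u` is placed: since each local-search step strictly
decreases the load, `x u` steps always suffice to reach a local minimum. -/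
def lsPlace (G : SimpleGraph V) [DecidableRel G.Adj] (ξ : V → List V)
    (x : V → ℕ) (u : V) : V :=
  lsIter G ξ x (x u) u

/-- Add one ball born at `u` to the load vector `x`. -/
def lsAdd (G : SimpleGraph V) [DecidableRel G.Adj] (ξ : V → List V)
    (x : V → ℕ) (u : V) : V → ℕ :=
  fun v => x v + if v = lsPlace G ξ x u then 1 else 0

/-- The load vector after allocating the balls with birthplaces `bs` (in order) by
local search allocation with the deterministic tie-breaking rule `ξ`. -/
def lsLoads (G : SimpleGraph V) [DecidableRel G.Adj] (ξ : V → List V)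
    (bs : List V) : V → ℕ :=
  bs.foldl (lsAdd G ξ) (fun _ => 0)

open scoped Classical

/-- The maximum load after allocating the balls with birthplaces `bs`. -/
noncomputable def lsMaxLoad (G : SimpleGraph V) [DecidableRel G.Adj] (ξ : V → List V)
    (bs : List V) : ℕ :=
  Finset.univ.sup (lsLoads G ξ bs)

/-!
Local search loads are 1-Lipschitz along edges, because a ball always settles at a local
minimum. For two Lipschitz load vectors with `a ≤ M + b`, dropping a ball born at the same
vertex into both preserves `a ≤ M + b`: if under `a` the ball lands at a vertex where the
bound is tight, then every vertex of its `a`-path is tight, the `b`-path makes the same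
first-in-order choices, and the ball lands at the same vertex under `b`. Taking `b` to be the
empty configuration gives `X_max(bs ++ cs) ≤ X_max(bs) + X_max(cs)`.

Cut the `n` balls into `⌈n/z⌉` consecutive blocks of at most `z` balls. A maximum load of at
least `⌈n/z⌉ x` forces some block to reach load `x`; disjoint blocks of birthplaces are
independent and the maximum load only grows with the number of balls, so a union bound over
the blocks gives the claim.
-/

namespace List

variable {α : Type*}

theorem argmin_eq_head?_of_forall_eq {f : α → ℕ} {c : ℕ} {l : List α}
    (hf : ∀ a ∈ l, f a = c) : l.argmin f = l.head? := by
  cases l with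
  | nil => rfl
  | cons a l =>
    rw [argmin_cons]
    cases h : l.argmin f with
    | none => rfl
    | some b => simp [hf b (mem_cons_of_mem _ (argmin_mem h)), hf a mem_cons_self]

theorem find?_eq_some_of_imp {p q : α → Bool} {l : List α} {a : α}
    (hqp : ∀ b, q b → p b) (h : l.find? p = some a) (ha : q a) : l.find? q = some a := by
  obtain ⟨-, pre, post, rfl, hpre⟩ := find?_eq_some_iff_append.mp h
  refine find?_eq_some_iff_append.mpr ⟨ha, pre, post, rfl, fun b hb => ?_⟩
  have hpb := hpre b hb
  cases hq : q b
  · rfl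
  · simp [hqp b hq] at hpb

end List

section LocalSearch

variable {W : Type*}

def EdgeLipschitz (G : SimpleGraph W) (x : W → ℕ) : Prop :=
  ∀ ⦃v w⦄, G.Adj v w → x v ≤ x w + 1

variable {G : SimpleGraph W} [DecidableRel G.Adj] {ξ : W → List W} {x a b : W → ℕ} {M : ℕ}
  {u : W}

theorem lsNext_adj_lt (h : lsNext G ξ x u ≠ u) :
    G.Adj u (lsNext G ξ x u) ∧ x (lsNext G ξ x u) < x u := by
  unfold lsNext at h ⊢
  cases harg : ((ξ u).filter fun w => decide (G.Adj u w ∧ x w < x u)).argmin x with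
  | none => rw [harg] at h; exact absurd rfl h
  | some m => simpa using (List.mem_filter.mp (List.argmin_mem harg)).2

theorem le_of_lsNext_eq_self (hξ : ∀ v w, G.Adj v w → w ∈ ξ v) (h : lsNext G ξ x u = u)
    {w : W} (hw : G.Adj u w) : x u ≤ x w := by
  by_contra! hlt
  have hmem : w ∈ (ξ u).filter fun w => decide (G.Adj u w ∧ x w < x u) :=
    List.mem_filter.mpr ⟨hξ u w hw, by simp [hw, hlt]⟩
  unfold lsNext at h
  cases harg : ((ξ u).filter fun w => decide (G.Adj u w ∧ x w < x u)).argmin x with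
  | none => rw [List.argmin_eq_none.mp harg] at hmem; exact List.not_mem_nil hmem
  | some m =>
    rw [harg, Option.getD_some] at h
    subst h
    simpa using (List.mem_filter.mp (List.argmin_mem harg)).2

theorem lsNext_eq_find? (hx : EdgeLipschitz G x) (u : W) :
    lsNext G ξ x u = ((ξ u).find? fun w => decide (G.Adj u w ∧ x w < x u)).getD u := by
  unfold lsNext
  rw [List.argmin_eq_head?_of_forall_eq (c := x u - 1), List.head?_filter]
  intro w hw
  have ⟨hadj, hlt⟩ := of_decide_eq_true (List.mem_filter.mp hw).2
  have := hx hadj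
  omega

theorem find?_eq_some_lsNext (hx : EdgeLipschitz G x) (h : lsNext G ξ x u ≠ u) :
    (ξ u).find? (fun w => decide (G.Adj u w ∧ x w < x u)) = some (lsNext G ξ x u) := by
  rw [lsNext_eq_find? hx] at h ⊢
  cases hfind : (ξ u).find? (fun w => decide (G.Adj u w ∧ x w < x u)) with
  | none => rw [hfind] at h; exact absurd rfl h
  | some v => rfl

theorem lsNext_eq_lsNext_of_tight (ha : EdgeLipschitz G a) (hb : EdgeLipschitz G b)
    (hab : ∀ v, a v ≤ M + b v) (h : lsNext G ξ a u ≠ u) (hu : a u = M + b u)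
    (hv : a (lsNext G ξ a u) = M + b (lsNext G ξ a u)) :
    lsNext G ξ b u = lsNext G ξ a u := by
  have ⟨hadj, hlt⟩ := lsNext_adj_lt h
  have hba : ∀ w, decide (G.Adj u w ∧ b w < b u) → decide (G.Adj u w ∧ a w < a u) := by
    intro w hw
    have := hab w
    simp only [decide_eq_true_eq] at hw ⊢
    exact ⟨hw.1, by omega⟩
  have hb_next : decide (G.Adj u (lsNext G ξ a u) ∧ b (lsNext G ξ a u) < b u) := by
    simp only [decide_eq_true_eq]
    exact ⟨hadj, by omega⟩
  rw [lsNext_eq_find? hb, List.find?_eq_some_of_imp hba (find?_eq_some_lsNext ha h) hb_next,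
    Option.getD_some]

variable [DecidableEq W]

theorem lsIter_of_lsNext_eq_self (h : lsNext G ξ x u = u) : ∀ k, lsIter G ξ x k u = u
  | 0 => rfl
  | k + 1 => by simp [lsIter, h]

theorem lsIter_eq_lsIter {k l : ℕ} (hk : x u ≤ k) (hl : x u ≤ l) :
    lsIter G ξ x k u = lsIter G ξ x l u := by
  induction k generalizing u l with
  | zero =>
    by_cases h : lsNext G ξ x u = u
    · rw [lsIter_of_lsNext_eq_self h, lsIter_of_lsNext_eq_self h]
    · have := (lsNext_adj_lt h).2; omega
  | succ k ih =>
    by_cases h : lsNext G ξ x u = u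
    · rw [lsIter_of_lsNext_eq_self h, lsIter_of_lsNext_eq_self h]
    · have hlt := (lsNext_adj_lt h).2
      obtain ⟨l, rfl⟩ : ∃ l', l = l' + 1 := ⟨l - 1, by omega⟩
      simp only [lsIter, if_neg h]
      exact ih (by omega) (by omega)

theorem lsPlace_of_lsNext_eq_self (h : lsNext G ξ x u = u) : lsPlace G ξ x u = u :=
  lsIter_of_lsNext_eq_self h _

theorem lsPlace_of_lsNext_ne_self (h : lsNext G ξ x u ≠ u) :
    lsPlace G ξ x u = lsPlace G ξ x (lsNext G ξ x u) := by
  have hlt := (lsNext_adj_lt h).2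
  obtain ⟨t, ht⟩ : ∃ t, x u = t + 1 := ⟨x u - 1, by omega⟩
  rw [lsPlace, ht, lsIter, if_neg h]
  exact lsIter_eq_lsIter (by omega) le_rfl

theorem lsPlace_induction (P : W → W → Prop) (fixed : ∀ u, lsNext G ξ x u = u → P u u)
    (step : ∀ u, lsNext G ξ x u ≠ u →
      P (lsNext G ξ x u) (lsPlace G ξ x (lsNext G ξ x u)) →
      P u (lsPlace G ξ x (lsNext G ξ x u)))
    (u : W) : P u (lsPlace G ξ x u) := by
  induction hk : x u using Nat.strong_induction_on generalizing u with
  | _ k ih =>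
    by_cases h : lsNext G ξ x u = u
    · rw [lsPlace_of_lsNext_eq_self h]
      exact fixed u h
    · rw [lsPlace_of_lsNext_ne_self h]
      exact step u h (ih _ (hk ▸ (lsNext_adj_lt h).2) _ rfl)

theorem lsNext_lsPlace : lsNext G ξ x (lsPlace G ξ x u) = lsPlace G ξ x u :=
  lsPlace_induction (fun _ p => lsNext G ξ x p = p) (fun _ h => h) (fun _ _ ih => ih) u

theorem EdgeLipschitz.add_lsPlace_le (hb : EdgeLipschitz G b) (u : W) :
    b u + a (lsPlace G ξ a u) ≤ b (lsPlace G ξ a u) + a u :=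
  lsPlace_induction (fun u p => b u + a p ≤ b p + a u) (fun _ _ => le_rfl)
    (fun u h ih => by
      have ⟨hadj, hlt⟩ := lsNext_adj_lt h
      have := hb hadj
      omega) u

theorem lsPlace_eq_of_tight (hξ : ∀ v w, G.Adj v w → w ∈ ξ v) (ha : EdgeLipschitz G a)
    (hb : EdgeLipschitz G b) (hab : ∀ v, a v ≤ M + b v) (u : W)
    (htight : a (lsPlace G ξ a u) = M + b (lsPlace G ξ a u)) :
    lsPlace G ξ b u = lsPlace G ξ a u := by
  revert htight
  refine lsPlace_induction (fun u p => a p = M + b p → lsPlace G ξ b u = p)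
    (fun u h _ => lsPlace_of_lsNext_eq_self (by_contra fun hb' => ?_))
    (fun u h ih htight => ?_) u
  · obtain ⟨hadj, hlt⟩ := lsNext_adj_lt hb'
    have := le_of_lsNext_eq_self hξ h hadj
    have := hab (lsNext G ξ b u)
    omega
  · -- Along the `a`-path a decreases by at least one per step and b by at most one,
    -- so tightness at the endpoint propagates back to every vertex of the path.
    have tight_of {w : W} (hw : lsPlace G ξ a w = lsPlace G ξ a (lsNext G ξ a u)) :
        a w = M + b w := by
      have hdesc := hb.add_lsPlace_le (ξ := ξ) (a := a) w
      have := hab w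
      rw [hw] at hdesc
      omega
    have hnext := lsNext_eq_lsNext_of_tight ha hb hab h
      (tight_of (lsPlace_of_lsNext_ne_self h)) (tight_of rfl)
    rw [lsPlace_of_lsNext_ne_self (hnext ▸ h), hnext]
    exact ih htight

theorem lsAdd_le_add (hξ : ∀ v w, G.Adj v w → w ∈ ξ v) (ha : EdgeLipschitz G a)
    (hb : EdgeLipschitz G b) (hab : ∀ v, a v ≤ M + b v) (u w : W) :
    lsAdd G ξ a u w ≤ M + lsAdd G ξ b u w := by
  have := hab w
  unfold lsAdd
  by_cases hw : w = lsPlace G ξ a u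
  · by_cases htight : a w = M + b w
    · have := lsPlace_eq_of_tight hξ ha hb hab u (hw ▸ htight)
      rw [if_pos hw, if_pos (hw.trans this.symm)]
      omega
    · split_ifs <;> omega
  · rw [if_neg hw]
    split_ifs <;> omega

theorem edgeLipschitz_lsAdd (hξ : ∀ v w, G.Adj v w → w ∈ ξ v) (ha : EdgeLipschitz G a)
    (u : W) : EdgeLipschitz G (lsAdd G ξ a u) := by
  intro v w hvw
  have := ha hvw
  by_cases hv : v = lsPlace G ξ a u
  · subst hv
    have := le_of_lsNext_eq_self hξ lsNext_lsPlace hvw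
    simp only [lsAdd, if_true]
    split_ifs <;> omega
  · simp only [lsAdd, if_neg hv]
    split_ifs <;> omega

theorem edgeLipschitz_foldl_lsAdd (hξ : ∀ v w, G.Adj v w → w ∈ ξ v) (cs : List W)
    (ha : EdgeLipschitz G a) : EdgeLipschitz G (cs.foldl (lsAdd G ξ) a) := by
  induction cs generalizing a with
  | nil => exact ha
  | cons u cs ih => exact ih (edgeLipschitz_lsAdd hξ ha u)

theorem foldl_lsAdd_le_add (hξ : ∀ v w, G.Adj v w → w ∈ ξ v) (cs : List W)
    (ha : EdgeLipschitz G a) (hb : EdgeLipschitz G b) (hab : ∀ v, a v ≤ M + b v) (v : W) :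
    cs.foldl (lsAdd G ξ) a v ≤ M + cs.foldl (lsAdd G ξ) b v := by
  induction cs generalizing a b with
  | nil => exact hab v
  | cons u cs ih =>
    exact ih (edgeLipschitz_lsAdd hξ ha u) (edgeLipschitz_lsAdd hξ hb u)
      (lsAdd_le_add hξ ha hb hab u)

theorem le_foldl_lsAdd (cs : List W) (a : W → ℕ) (v : W) :
    a v ≤ cs.foldl (lsAdd G ξ) a v := by
  induction cs generalizing a with
  | nil => exact le_rfl
  | cons u cs ih => exact (Nat.le_add_right (a v) _).trans (ih (lsAdd G ξ a u))

theorem lsLoads_append (bs cs : List W) :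
    lsLoads G ξ (bs ++ cs) = cs.foldl (lsAdd G ξ) (lsLoads G ξ bs) :=
  List.foldl_append

theorem edgeLipschitz_lsLoads (hξ : ∀ v w, G.Adj v w → w ∈ ξ v) (bs : List W) :
    EdgeLipschitz G (lsLoads G ξ bs) :=
  edgeLipschitz_foldl_lsAdd hξ bs fun _ _ _ => Nat.zero_le _

variable [Fintype W]

theorem lsLoads_le_lsMaxLoad (bs : List W) (v : W) : lsLoads G ξ bs v ≤ lsMaxLoad G ξ bs :=
  Finset.le_sup (mem_univ v)

theorem lsMaxLoad_le_lsMaxLoad_append (bs cs : List W) :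
    lsMaxLoad G ξ bs ≤ lsMaxLoad G ξ (bs ++ cs) :=
  Finset.sup_le fun v _ => (le_foldl_lsAdd cs _ v).trans <| by
    rw [← lsLoads_append]; exact lsLoads_le_lsMaxLoad _ v

theorem lsMaxLoad_append_le (hξ : ∀ v w, G.Adj v w → w ∈ ξ v) (bs cs : List W) :
    lsMaxLoad G ξ (bs ++ cs) ≤ lsMaxLoad G ξ bs + lsMaxLoad G ξ cs :=
  Finset.sup_le fun v _ => by
    rw [lsLoads_append]
    calc cs.foldl (lsAdd G ξ) (lsLoads G ξ bs) v ≤ lsMaxLoad G ξ bs + lsLoads G ξ cs v :=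
          foldl_lsAdd_le_add hξ cs (edgeLipschitz_lsLoads hξ bs) (edgeLipschitz_lsLoads hξ [])
            (fun w => Nat.le_add_right_of_le (lsLoads_le_lsMaxLoad bs w)) v
      _ ≤ lsMaxLoad G ξ bs + lsMaxLoad G ξ cs :=
          Nat.add_le_add_left (lsLoads_le_lsMaxLoad cs v) _

end LocalSearch

theorem card_filter_fin_append {α : Type*} [Fintype α] {m r : ℕ}
    (R : (Fin (m + r) → α) → Prop) [DecidablePred R] :
    #{f | R f} = #{p : (Fin m → α) × (Fin r → α) | R (Fin.append p.1 p.2)} :=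
  (Finset.card_equiv (Fin.appendEquiv m r) (by simp [Fin.appendEquiv])).symm

theorem card_filter_fst {α β : Type*} [Fintype α] [Fintype β] (P : α → Prop)
    [DecidablePred P] :
    #{p : α × β | P p.1} = #{a | P a} * Fintype.card β := by
  rw [← univ_product_univ, filter_product_left, card_product, card_univ]

theorem card_filter_snd {α β : Type*} [Fintype α] [Fintype β] (Q : β → Prop)
    [DecidablePred Q] :
    #{p : α × β | Q p.2} = Fintype.card α * #{b | Q b} := by
  rw [← univ_product_univ, filter_product_right, card_product, card_univ]

section TailProbability

variable (G : SimpleGraph V) [DecidableRel G.Adj] (ξ : V → List V)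

noncomputable def lsTailProb (m t : ℕ) : ℝ :=
  #{bs : Fin m → V | t ≤ lsMaxLoad G ξ (List.ofFn bs)} / (Fintype.card V : ℝ) ^ m

variable {G ξ}

theorem lsTailProb_mono_length [Nonempty V] {m m' : ℕ} (h : m ≤ m') (t : ℕ) :
    lsTailProb G ξ m t ≤ lsTailProb G ξ m' t := by
  obtain ⟨r, rfl⟩ := Nat.exists_eq_add_of_le h
  have hcount : #{bs : Fin m → V | t ≤ lsMaxLoad G ξ (List.ofFn bs)} * Fintype.card V ^ r ≤
      #{bs : Fin (m + r) → V | t ≤ lsMaxLoad G ξ (List.ofFn bs)} := by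
    rw [card_filter_fin_append]
    calc _ = #{p : (Fin m → V) × (Fin r → V) | t ≤ lsMaxLoad G ξ (List.ofFn p.1)} := by
          rw [card_filter_fst (fun bs : Fin m → V => t ≤ lsMaxLoad G ξ (List.ofFn bs))]; simp
      _ ≤ _ := by
          refine card_le_card (monotone_filter_right _ fun p _ hp => ?_)
          rw [List.ofFn_fin_append]
          exact hp.trans (lsMaxLoad_le_lsMaxLoad_append _ _)
  have hN : (0 : ℝ) < Fintype.card V := by exact_mod_cast Fintype.card_pos
  calc lsTailProb G ξ m t
      = (#{bs : Fin m → V | t ≤ lsMaxLoad G ξ (List.ofFn bs)} * Fintype.card V ^ r : ℕ) /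
          (Fintype.card V : ℝ) ^ (m + r) := by
        unfold lsTailProb; push_cast; field_simp; ring
    _ ≤ lsTailProb G ξ (m + r) t := by unfold lsTailProb; gcongr

theorem lsTailProb_add_le [Nonempty V] (hξ : ∀ v w, G.Adj v w → w ∈ ξ v) (m r s t : ℕ) :
    lsTailProb G ξ (m + r) (s + t) ≤ lsTailProb G ξ m s + lsTailProb G ξ r t := by
  have hcount : #{bs : Fin (m + r) → V | s + t ≤ lsMaxLoad G ξ (List.ofFn bs)} ≤
      #{bs : Fin m → V | s ≤ lsMaxLoad G ξ (List.ofFn bs)} * Fintype.card V ^ r +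
        Fintype.card V ^ m * #{bs : Fin r → V | t ≤ lsMaxLoad G ξ (List.ofFn bs)} := by
    rw [card_filter_fin_append]
    calc _ ≤ #{p : (Fin m → V) × (Fin r → V) | s ≤ lsMaxLoad G ξ (List.ofFn p.1) ∨
            t ≤ lsMaxLoad G ξ (List.ofFn p.2)} := by
          refine card_le_card (monotone_filter_right _ fun p _ hp => ?_)
          rw [List.ofFn_fin_append] at hp
          have := lsMaxLoad_append_le hξ (List.ofFn p.1) (List.ofFn p.2)
          omega
      _ ≤ _ := by
          rw [filter_or]
          refine (card_union_le _ _).trans_eq ?_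
          rw [card_filter_fst (fun bs : Fin m → V => s ≤ lsMaxLoad G ξ (List.ofFn bs)),
            card_filter_snd (fun bs : Fin r → V => t ≤ lsMaxLoad G ξ (List.ofFn bs))]
          simp
  have hN : (0 : ℝ) < Fintype.card V := by exact_mod_cast Fintype.card_pos
  calc lsTailProb G ξ (m + r) (s + t)
      ≤ (#{bs : Fin m → V | s ≤ lsMaxLoad G ξ (List.ofFn bs)} * Fintype.card V ^ r +
        Fintype.card V ^ m * #{bs : Fin r → V | t ≤ lsMaxLoad G ξ (List.ofFn bs)} : ℕ) /
          (Fintype.card V : ℝ) ^ (m + r) := by unfold lsTailProb; gcongr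
    _ = lsTailProb G ξ m s + lsTailProb G ξ r t := by
        unfold lsTailProb; push_cast; field_simp; ring

theorem lsTailProb_le_mul [Nonempty V] (hξ : ∀ v w, G.Adj v w → w ∈ ξ v) {z x k m : ℕ}
    (hk : 0 < k) (hm : m ≤ k * z) : lsTailProb G ξ m (k * x) ≤ k * lsTailProb G ξ z x := by
  induction k, hk using Nat.le_induction generalizing m with
  | base => simpa using lsTailProb_mono_length (by simpa using hm) x
  | succ k hk ih =>
    obtain ⟨m₁, m₂, rfl, h₁, h₂⟩ : ∃ m₁ m₂, m = m₁ + m₂ ∧ m₁ ≤ z ∧ m₂ ≤ k * z :=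
      ⟨min m z, m - min m z, by omega, min_le_right _ _, by rw [add_one_mul] at hm; omega⟩
    calc lsTailProb G ξ (m₁ + m₂) ((k + 1) * x) = lsTailProb G ξ (m₁ + m₂) (x + k * x) := by
          rw [add_one_mul, add_comm (k * x)]
      _ ≤ lsTailProb G ξ m₁ x + lsTailProb G ξ m₂ (k * x) := lsTailProb_add_le hξ ..
      _ ≤ lsTailProb G ξ z x + k * lsTailProb G ξ z x :=
          add_le_add (lsTailProb_mono_length h₁ x) (ih h₂)
      _ = (k + 1 : ℕ) * lsTailProb G ξ z x := by push_cast; ring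

end TailProbability

/-- **Subadditivity.**
For local search allocation of `n` balls into the `n` vertices of `G` with i.i.d.
uniform birthplaces (probabilities written as counting fractions over the finite
sample space of birthplace sequences), for any `1 ≤ z ≤ n` and any `x ≥ 0`,
`P[X_max^(n) ≥ ⌈n/z⌉·x] ≤ ⌈n/z⌉ · P[X_max^(z) ≥ x]`. -/
theorem lsMaxLoad_subadditivity (G : SimpleGraph V) [DecidableRel G.Adj]
    (ξ : V → List V)
    (hξ : ∀ v, (ξ v).Nodup ∧ ∀ w, w ∈ ξ v ↔ G.Adj v w)
    (n : ℕ) (hcard : Fintype.card V = n)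
    (z : ℕ) (hz1 : 1 ≤ z) (hzn : z ≤ n) (x : ℕ) :
    ((univ.filter (fun bs : Fin n → V =>
        ((n + z - 1) / z) * x ≤ lsMaxLoad G ξ (List.ofFn bs))).card : ℝ)
        / (Fintype.card V : ℝ) ^ n
      ≤ ((n + z - 1) / z : ℕ) *
        (((univ.filter (fun bs : Fin z → V =>
            x ≤ lsMaxLoad G ξ (List.ofFn bs))).card : ℝ)
          / (Fintype.card V : ℝ) ^ z) := by
  have : Nonempty V := Fintype.card_pos_iff.mp (by omega)
  have hk : 0 < (n + z - 1) / z := Nat.div_pos (by omega) hz1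
  have hn : n ≤ (n + z - 1) / z * z := by
    have := Nat.lt_div_mul_add (a := n + z - 1) hz1
    omega
  exact lsTailProb_le_mul (fun v w hvw => ((hξ v).2 w).2 hvw) hk hn
end

section
/- (Comparison with 1-choice) For any k ≥ 0, there is a coupling of the local search allocation load vector X^(k) and the 1-choice load vector X̄^(k) (each ball placed directly at its uniformly random birthplace) such that with probability 1, X̄^(k) majorizes X^(k). Consequently, the maximum load X̄_max^(k) of the 1-choice process stochastically dominates the maximum load X_max^(k) of the local search allocation. -/
open Finset

variable {V : Type*} [Fintype V] [DecidableEq V]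

open scoped Classical

/-- `b` majorizes `a`: for every `κ`, the sum of the `κ` largest entries of `b` is at
least the sum of the `κ` largest entries of `a` (here both vectors have equal total
sum, so this is the usual majorization). -/
def Majorizes (b a : V → ℕ) : Prop :=
  ∀ A : Finset V, ∃ B : Finset V, B.card = A.card ∧ ∑ v ∈ A, a v ≤ ∑ v ∈ B, b v

/-- The load vector of the 1-choice process: each ball is placed directly at its
birthplace. -/
def oneChoiceLoads (bs : List V) : V → ℕ := fun v => bs.count v

/-!
Compare load vectors through `topSum x κ`, the sum of their `κ` largest entries. The coupling
gives the 1-choice ball the vertex whose rank in the current 1-choice loads equals the rank `ℓ`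
of the local-search birthplace in the current local-search loads; local search only moves that
ball to a vertex whose load is at most the `ℓ`-th largest. Adding the two balls preserves
`topSum a ≤ topSum b`: the only danger is a `κ` with `topSum a κ = topSum b κ` where the
local-search ball raises `topSum a κ`. Then `a` is constant between ranks `κ - 1` and `ℓ`, and
comparing the top sums at `κ - 1`, `κ` and `ℓ + 1` shows that `b` is constant there too, so the
1-choice ball raises `topSum b κ` as well. The coupling is a bijection of birthplace sequences,
so the domination of the maximum load follows by counting.
-/

theorem Antitone.sum_le_sum_range_card {M : Type*} [AddCommMonoid M] [PartialOrder M]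
    [IsOrderedAddMonoid M] {s : ℕ → M} (hs : Antitone s) (I : Finset ℕ) :
    ∑ i ∈ I, s i ≤ ∑ i ∈ range #I, s i := by
  induction I using Finset.induction_on_max with
  | empty => simp
  | insert m J hJm ih =>
    have hm : m ∉ J := fun h => lt_irrefl m (hJm m h)
    have hJ : #J ≤ m := by
      simpa using card_le_card (fun i hi => mem_range.2 (hJm i hi) : J ⊆ range m)
    rw [sum_insert hm, card_insert_of_notMem hm, sum_range_succ, add_comm]
    exact add_le_add ih (hs hJ)

theorem Antitone.le_of_sum_range_le_of_eq {α β : ℕ → ℕ} (hβ : Antitone β) {m ℓ : ℕ}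
    (hmℓ : m < ℓ) (hα : ∀ i ∈ Icc m ℓ, α i = α m)
    (hdom : ∀ κ, ∑ i ∈ range κ, α i ≤ ∑ i ∈ range κ, β i)
    (heq : ∑ i ∈ range (m + 1), α i = ∑ i ∈ range (m + 1), β i) : β m ≤ β ℓ := by
  have hβα : β m ≤ α m := by
    have := hdom m
    rw [sum_range_succ, sum_range_succ] at heq
    omega
  by_contra! hlt
  have htail : ∑ i ∈ Ico (m + 1) (ℓ + 1), β i < ∑ i ∈ Ico (m + 1) (ℓ + 1), α i := by
    refine sum_lt_sum (fun i hi => ?_) ⟨ℓ, by simp [hmℓ], ?_⟩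
    · rw [mem_Ico] at hi
      rw [hα i (mem_Icc.2 ⟨by omega, by omega⟩)]
      exact (hβ (by omega : m ≤ i)).trans hβα
    · rw [hα ℓ (mem_Icc.2 ⟨hmℓ.le, le_rfl⟩)]
      exact hlt.trans_le hβα
  have := hdom (ℓ + 1)
  rw [← sum_range_add_sum_Ico _ (by omega : m + 1 ≤ ℓ + 1),
    ← sum_range_add_sum_Ico β (by omega : m + 1 ≤ ℓ + 1)] at this
  omega

section Ranking

variable {V : Type*} [Fintype V]

theorem exists_equiv_fin_antitone {α : Type*} [LinearOrder α] (x : V → α) :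
    ∃ σ : Fin (Fintype.card V) ≃ V, Antitone (x ∘ σ) := by
  let e := (Fintype.equivFin V).symm
  let f := OrderDual.toDual ∘ x ∘ e
  exact ⟨(Tuple.sort f).trans e, monotone_toDual_comp_iff.1 (Tuple.monotone_sort f)⟩

noncomputable def loadRanking (x : V → ℕ) : Fin (Fintype.card V) ≃ V :=
  (exists_equiv_fin_antitone x).choose

theorem antitone_loadRanking (x : V → ℕ) : Antitone (x ∘ loadRanking x) :=
  (exists_equiv_fin_antitone x).choose_spec

noncomputable def sortedLoad (x : V → ℕ) (i : ℕ) : ℕ :=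
  if h : i < Fintype.card V then x (loadRanking x ⟨i, h⟩) else 0

theorem sortedLoad_coe (x : V → ℕ) (i : Fin (Fintype.card V)) :
    sortedLoad x i = x (loadRanking x i) := by
  simp [sortedLoad]

theorem antitone_sortedLoad (x : V → ℕ) : Antitone (sortedLoad x) := by
  intro i j hij
  unfold sortedLoad
  split_ifs with hj hi hi
  · exact antitone_loadRanking x (show (⟨i, hi⟩ : Fin _) ≤ ⟨j, hj⟩ from hij)
  · omega
  · exact Nat.zero_le _
  · exact le_rfl

noncomputable def topSum (x : V → ℕ) (κ : ℕ) : ℕ :=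
  ∑ i ∈ range κ, sortedLoad x i

noncomputable def topSet (x : V → ℕ) (κ : ℕ) : Finset V :=
  (univ.filter fun i : Fin (Fintype.card V) => (i : ℕ) < κ).map (loadRanking x).toEmbedding

theorem card_topSet (x : V → ℕ) (κ : ℕ) : #(topSet x κ) = min (Fintype.card V) κ := by
  rw [topSet, card_map, Fin.card_filter_val_lt]

theorem topSet_subset_succ (x : V → ℕ) (κ : ℕ) : topSet x κ ⊆ topSet x (κ + 1) :=
  map_subset_map.2 fun i hi => by
    simp only [mem_filter, mem_univ, true_and] at hi ⊢
    omega

theorem topSum_mono (x : V → ℕ) : Monotone (topSum x) :=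
  fun _ _ h => sum_le_sum_of_subset (range_mono h)

theorem sum_topSet (x : V → ℕ) (κ : ℕ) : ∑ v ∈ topSet x κ, x v = topSum x κ := by
  have hzero : ∀ i ∈ range κ, i ∉ range (min (Fintype.card V) κ) → sortedLoad x i = 0 :=
    fun i hiκ hi => dif_neg (by simp at hiκ hi; omega)
  have hfilter : (range (Fintype.card V)).filter (· < κ) = range (min (Fintype.card V) κ) := by
    ext i; simp
  calc ∑ v ∈ topSet x κ, x v
      = ∑ i : Fin (Fintype.card V), if (i : ℕ) < κ then sortedLoad x i else 0 := by
        simp [topSet, sum_map, sum_filter, sortedLoad_coe]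
    _ = ∑ i ∈ range (min (Fintype.card V) κ), sortedLoad x i := by
        rw [Fin.sum_univ_eq_sum_range (fun i => if i < κ then sortedLoad x i else 0),
          ← sum_filter, hfilter]
    _ = topSum x κ := sum_subset (range_mono (min_le_right _ _)) hzero

theorem sum_le_topSum (x : V → ℕ) {A : Finset V} {κ : ℕ} (hA : #A ≤ κ) :
    ∑ v ∈ A, x v ≤ topSum x κ := by
  let rank : V ↪ ℕ := (loadRanking x).symm.toEmbedding.trans Fin.valEmbedding
  calc ∑ v ∈ A, x v = ∑ i ∈ A.map rank, sortedLoad x i := by simp [rank, sum_map, sortedLoad_coe]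
    _ ≤ ∑ i ∈ range #(A.map rank), sortedLoad x i :=
        (antitone_sortedLoad x).sum_le_sum_range_card _
    _ ≤ topSum x κ := topSum_mono x (by simpa using hA)

theorem topSum_le_topSum_of_le {x y : V → ℕ} (h : x ≤ y) (κ : ℕ) : topSum x κ ≤ topSum y κ :=
  calc topSum x κ = ∑ v ∈ topSet x κ, x v := (sum_topSet x κ).symm
    _ ≤ ∑ v ∈ topSet x κ, y v := sum_le_sum fun v _ => h v
    _ ≤ topSum y κ := sum_le_topSum y ((card_topSet x κ).trans_le (min_le_right _ _))

noncomputable def coupledBirth (a b : V → ℕ) : V ≃ V :=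
  (loadRanking a).symm.trans (loadRanking b)

end Ranking

theorem Finset.sum_add_single {ι M : Type*} [DecidableEq ι] [AddCommMonoid M] (x : ι → M)
    (w : ι) (c : M) (A : Finset ι) :
    ∑ v ∈ A, (x + Pi.single w c : ι → M) v = ∑ v ∈ A, x v + if w ∈ A then c else 0 := by
  rw [← sum_pi_single' w c A, ← sum_add_distrib]
  rfl

section AddBall

variable {V : Type*} [Fintype V] [DecidableEq V]

theorem topSum_add_single_le (x : V → ℕ) (w : V) (κ : ℕ) :
    topSum (x + Pi.single w 1) κ ≤ topSum x κ + 1 := by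
  have hA : #(topSet (x + Pi.single w 1) κ) ≤ κ := (card_topSet _ κ).trans_le (min_le_right _ _)
  rw [← sum_topSet, sum_add_single]
  have := sum_le_topSum x hA
  split <;> omega

theorem topSum_succ_add_single_le_of_lt {x : V → ℕ} {w : V} {κ : ℕ}
    (h : x w < sortedLoad x κ) : topSum (x + Pi.single w 1) (κ + 1) ≤ topSum x (κ + 1) := by
  have hA : #(topSet (x + Pi.single w 1) (κ + 1)) ≤ κ + 1 :=
    (card_topSet _ _).trans_le (min_le_right _ _)
  rw [← sum_topSet, sum_add_single]
  set A := topSet (x + Pi.single w 1) (κ + 1)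
  split_ifs with hw
  · have hrest := sum_le_topSum x (κ := κ) (by rw [card_erase_of_mem hw]; omega)
    rw [← add_sum_erase A x hw, topSum, sum_range_succ, ← topSum]
    omega
  · simpa using sum_le_topSum x hA

theorem topSum_succ_lt_add_single_of_le {x : V → ℕ} {w : V} {κ : ℕ}
    (h : sortedLoad x κ ≤ x w) : topSum x (κ + 1) < topSum (x + Pi.single w 1) (κ + 1) := by
  by_cases hw : w ∈ topSet x (κ + 1)
  · have hA : #(topSet x (κ + 1)) ≤ κ + 1 := (card_topSet _ _).trans_le (min_le_right _ _)
    have := sum_le_topSum (x + Pi.single w 1) hA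
    rw [sum_add_single, if_pos hw, sum_topSet] at this
    omega
  · have hw' : w ∉ topSet x κ := fun h => hw (topSet_subset_succ x κ h)
    have hA : #(insert w (topSet x κ)) ≤ κ + 1 :=
      (card_insert_le _ _).trans (by have := card_topSet x κ; omega)
    have := sum_le_topSum (x + Pi.single w 1) hA
    rw [sum_add_single, if_pos (mem_insert_self _ _), sum_insert hw', sum_topSet] at this
    rw [topSum, sum_range_succ, ← topSum]
    omega

theorem topSum_add_single_le_add_single {a b : V → ℕ} (hab : ∀ κ, topSum a κ ≤ topSum b κ)
    {p w : V} {ℓ : ℕ} (hp : a p ≤ sortedLoad a ℓ) (hw : sortedLoad b ℓ ≤ b w) (κ : ℕ) :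
    topSum (a + Pi.single p 1) κ ≤ topSum (b + Pi.single w 1) κ := by
  obtain _ | m := κ
  · simp [topSum]
  have hb_le : topSum b (m + 1) ≤ topSum (b + Pi.single w 1) (m + 1) :=
    topSum_le_topSum_of_le (fun v => Nat.le_add_right _ _) _
  rcases (hab (m + 1)).lt_or_eq with hlt | heq
  · have := topSum_add_single_le a p (m + 1)
    omega
  by_cases hpm : a p < sortedLoad a m
  · have := topSum_succ_add_single_le_of_lt hpm
    omega
  have hbw : sortedLoad b m ≤ b w := by
    rcases le_or_gt ℓ m with hℓm | hmℓ
    · exact (antitone_sortedLoad b hℓm).trans hw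
    -- `a` is constant on `[m, ℓ]`, and the equality at `m + 1` forces `b` to be so as well
    refine le_trans ?_ hw
    refine (antitone_sortedLoad b).le_of_sum_range_le_of_eq hmℓ (fun i hi => ?_) hab heq
    rw [mem_Icc] at hi
    have := antitone_sortedLoad a hi.1
    have := antitone_sortedLoad a hi.2
    omega
  have := topSum_add_single_le a p (m + 1)
  have := topSum_succ_lt_add_single_of_le hbw
  omega

end AddBall

section Coupling

variable {V : Type*} (G : SimpleGraph V) [DecidableRel G.Adj] (ξ : V → List V)

theorem apply_lsNext_le (x : V → ℕ) (u : V) : x (lsNext G ξ x u) ≤ x u := by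
  unfold lsNext
  rcases h : ((ξ u).filter fun w => decide (G.Adj u w ∧ x w < x u)).argmin x with _ | v
  · exact le_rfl
  · have hv := (List.mem_filter.1 (List.argmin_mem h)).2
    simp only [decide_eq_true_eq] at hv
    exact hv.2.le

variable [DecidableEq V]

theorem apply_lsIter_le (x : V → ℕ) (n : ℕ) (u : V) : x (lsIter G ξ x n u) ≤ x u := by
  induction n generalizing u with
  | zero => rfl
  | succ n ih =>
    rw [lsIter]
    split
    · rfl
    · exact (ih _).trans (apply_lsNext_le G ξ x u)

theorem lsAdd_eq_add_single (x : V → ℕ) (u : V) :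
    lsAdd G ξ x u = x + Pi.single (lsPlace G ξ x u) 1 := by
  ext v
  simp [lsAdd, Pi.single_apply]

theorem oneChoiceLoads_nil : oneChoiceLoads ([] : List V) = 0 := rfl

theorem oneChoiceLoads_cons (w : V) (ws : List V) :
    oneChoiceLoads (w :: ws) = Pi.single w 1 + oneChoiceLoads ws := by
  ext v
  by_cases h : v = w
  · subst h
    simp [oneChoiceLoads, add_comm]
  · simp [oneChoiceLoads, h, Ne.symm h]

variable [Fintype V]

theorem topSum_lsAdd_le {a b : V → ℕ} (hab : ∀ κ, topSum a κ ≤ topSum b κ) (u : V) (κ : ℕ) :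
    topSum (lsAdd G ξ a u) κ ≤ topSum (b + Pi.single (coupledBirth a b u) 1) κ := by
  set i := (loadRanking a).symm u
  rw [lsAdd_eq_add_single]
  refine topSum_add_single_le_add_single hab (ℓ := i) ?_ (sortedLoad_coe b i).le κ
  rw [sortedLoad_coe, Equiv.apply_symm_apply]
  exact apply_lsIter_le G ξ a _ u

noncomputable def coupling : (k : ℕ) → (V → ℕ) → (V → ℕ) → (Fin k → V) ≃ (Fin k → V)
  | 0, _, _ => Equiv.refl _
  | k + 1, a, b => (Fin.consEquiv fun _ => V).symm.trans <|
      ((coupledBirth a b).prodShear fun u =>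
        coupling k (lsAdd G ξ a u) (b + Pi.single (coupledBirth a b u) 1)).trans
        (Fin.consEquiv fun _ => V)

theorem ofFn_coupling_succ (k : ℕ) (a b : V → ℕ) (bs : Fin (k + 1) → V) :
    List.ofFn (coupling G ξ (k + 1) a b bs) = coupledBirth a b (bs 0) ::
      List.ofFn (coupling G ξ k (lsAdd G ξ a (bs 0))
        (b + Pi.single (coupledBirth a b (bs 0)) 1) (Fin.tail bs)) := by
  simp [coupling, List.ofFn_succ]

theorem topSum_foldl_lsAdd_le_coupling (k : ℕ) {a b : V → ℕ}
    (hab : ∀ κ, topSum a κ ≤ topSum b κ) (bs : Fin k → V) (κ : ℕ) :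
    topSum ((List.ofFn bs).foldl (lsAdd G ξ) a) κ ≤
      topSum (b + oneChoiceLoads (List.ofFn (coupling G ξ k a b bs))) κ := by
  induction k generalizing a b with
  | zero => simpa [coupling, oneChoiceLoads_nil] using hab κ
  | succ k ih =>
    rw [ofFn_coupling_succ, oneChoiceLoads_cons, ← add_assoc, List.ofFn_succ, List.foldl_cons]
    exact ih (topSum_lsAdd_le G ξ hab (bs 0)) _

end Coupling

section Majorization

variable {V : Type*} [Fintype V]

theorem majorizes_of_topSum_le {a b : V → ℕ} (h : ∀ κ, topSum a κ ≤ topSum b κ) :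
    Majorizes b a := by
  intro A
  refine ⟨topSet b #A, by rw [card_topSet, min_eq_right (card_le_univ A)], ?_⟩
  rw [sum_topSet]
  exact (sum_le_topSum a le_rfl).trans (h _)

theorem Majorizes.sup_le_sup {a b : V → ℕ} (h : Majorizes b a) : univ.sup a ≤ univ.sup b := by
  refine Finset.sup_le fun v _ => ?_
  obtain ⟨B, hB, hle⟩ := h {v}
  obtain ⟨w, rfl⟩ := card_eq_one.1 hB
  simpa using hle.trans (le_sup (f := b) (mem_univ w))

end Majorization

theorem lsLoads_majorized_by_oneChoice_general (G : SimpleGraph V) [DecidableRel G.Adj]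
    (ξ : V → List V)
    (k : ℕ) :
    (∃ φ : (Fin k → V) ≃ (Fin k → V), ∀ bs : Fin k → V,
        Majorizes (oneChoiceLoads (List.ofFn (φ bs))) (lsLoads G ξ (List.ofFn bs)))
    ∧ ∀ x : ℕ,
        (univ.filter (fun bs : Fin k → V =>
          x ≤ univ.sup (lsLoads G ξ (List.ofFn bs)))).card
        ≤ (univ.filter (fun bs : Fin k → V =>
          x ≤ univ.sup (oneChoiceLoads (List.ofFn bs)))).card := by
  set φ := coupling G ξ k 0 0
  have hφ (bs : Fin k → V) :
      Majorizes (oneChoiceLoads (List.ofFn (φ bs))) (lsLoads G ξ (List.ofFn bs)) :=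
    majorizes_of_topSum_le fun κ => by
      have := topSum_foldl_lsAdd_le_coupling G ξ k (a := 0) (b := 0) (fun _ => le_rfl) bs κ
      rwa [zero_add] at this
  refine ⟨⟨φ, hφ⟩, fun x => card_le_card_of_injOn φ (fun bs hbs => ?_) φ.injective.injOn⟩
  simp only [mem_coe, mem_filter, mem_univ, true_and] at hbs ⊢
  exact hbs.trans (hφ bs).sup_le_sup

/-- **Comparison with the 1-choice process.**
For any `k ≥ 0` there is a coupling (a measure-preserving bijection of the uniform
finite sample space of birthplace sequences) under which, with probability 1, the
1-choice load vector majorizes the local search load vector.  Consequently the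
maximum load of the 1-choice process stochastically dominates the maximum load of
the local search allocation. -/
theorem lsLoads_majorized_by_oneChoice (G : SimpleGraph V) [DecidableRel G.Adj]
    (ξ : V → List V)
    (hξ : ∀ v, (ξ v).Nodup ∧ ∀ w, w ∈ ξ v ↔ G.Adj v w)
    (k : ℕ) :
    (∃ φ : (Fin k → V) ≃ (Fin k → V), ∀ bs : Fin k → V,
        Majorizes (oneChoiceLoads (List.ofFn (φ bs))) (lsLoads G ξ (List.ofFn bs)))
    ∧ ∀ x : ℕ,
        (univ.filter (fun bs : Fin k → V =>
          x ≤ univ.sup (lsLoads G ξ (List.ofFn bs)))).card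
        ≤ (univ.filter (fun bs : Fin k → V =>
          x ≤ univ.sup (oneChoiceLoads (List.ofFn bs)))).card :=
  lsLoads_majorized_by_oneChoice_general G ξ k
end
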